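/- Equal-cost multi-path routing conserves flow: if a unit of traffic injected at destination t is recursively split backward along the shortest-path DAG, with the flow at each vertex v ≠ s split among its shortest-path predecessors u in proportion σ(u)/σ(v), then the total flow arriving at the source s equals the injected unit. -/
import Mathlib


open SimpleGraph Finset

private lemma wl_card_pos {V : Type*} [Fintype V] [DecidableEq V]
    (G : SimpleGraph V) [DecidableRel G.Adj] {s v : V} (hr : G.Reachable s v) :
    0 < (G.finsetWalkLength (G.dist s v) s v).card := by
  obtain ⟨p, hp⟩ := hr.exists_walk_length_eq_dist
  exact Finset.card_pos.mpr ⟨p, SimpleGraph.mem_finsetWalkLength_iff.mpr hp⟩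

private lemma wl_card_eq_pow {V : Type*} [Fintype V] [DecidableEq V]
    (G : SimpleGraph V) [DecidableRel G.Adj] (n : ℕ) (u v : V) :
    ((G.adjMatrix ℕ) ^ n) u v = (G.finsetWalkLength n u v).card := by
  rw [SimpleGraph.adjMatrix_pow_apply_eq_card_walk,
    SimpleGraph.card_set_walk_length_eq, Nat.cast_id]

/-- The number of shortest walks to `w` is the sum over shortest-path
predecessors of the number of shortest walks to the predecessor. -/
private lemma sigma_rec {V : Type*} [Fintype V] [DecidableEq V]
    (G : SimpleGraph V) [DecidableRel G.Adj] (s : V) {w : V} {n : ℕ}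
    (hw : G.Reachable s w) (hd : G.dist s w = n + 1) :
    (G.finsetWalkLength (G.dist s w) s w).card
      = ∑ v ∈ Finset.univ.filter
          (fun v => G.Adj v w ∧ G.dist s v + 1 = G.dist s w),
          (G.finsetWalkLength (G.dist s v) s v).card := by
  have key : (G.finsetWalkLength (n + 1) s w).card
      = ∑ v ∈ G.neighborFinset w, (G.finsetWalkLength n s v).card := by
    rw [← wl_card_eq_pow, pow_succ, SimpleGraph.mul_adjMatrix_apply]
    exact Finset.sum_congr rfl fun v _ => wl_card_eq_pow G n s v
  rw [hd, key]
  have hsub : Finset.univ.filter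
      (fun v => G.Adj v w ∧ G.dist s v + 1 = n + 1) ⊆ G.neighborFinset w := by
    intro v hv
    rw [Finset.mem_filter] at hv
    exact (G.mem_neighborFinset w v).mpr hv.2.1.symm
  have hz : ∀ v ∈ G.neighborFinset w, v ∉ Finset.univ.filter
      (fun v => G.Adj v w ∧ G.dist s v + 1 = n + 1) →
      (G.finsetWalkLength n s v).card = 0 := by
    intro v hvN hvF
    have hadj : G.Adj v w := ((G.mem_neighborFinset w v).mp hvN).symm
    by_contra hc
    have hne : (G.finsetWalkLength n s v).Nonempty :=
      Finset.nonempty_of_ne_empty (fun h => hc (by rw [h, Finset.card_empty]))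
    obtain ⟨p, hp⟩ := hne
    rw [SimpleGraph.mem_finsetWalkLength_iff] at hp
    have hle : G.dist s v ≤ n := hp ▸ G.dist_le p
    have hrv : G.Reachable s v := ⟨p⟩
    obtain ⟨q, hq⟩ := hrv.exists_walk_length_eq_dist
    have hdw : G.dist s w ≤ G.dist s v + 1 := by
      have := G.dist_le (q.concat hadj)
      rwa [SimpleGraph.Walk.length_concat, hq] at this
    have hveq : G.dist s v = n := by omega
    exact hvF (Finset.mem_filter.mpr ⟨Finset.mem_univ v, hadj, by omega⟩)
  calc ∑ v ∈ G.neighborFinset w, (G.finsetWalkLength n s v).card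
      = ∑ v ∈ Finset.univ.filter (fun v => G.Adj v w ∧ G.dist s v + 1 = n + 1),
          (G.finsetWalkLength n s v).card := (Finset.sum_subset hsub hz).symm
    _ = ∑ v ∈ Finset.univ.filter (fun v => G.Adj v w ∧ G.dist s v + 1 = n + 1),
          (G.finsetWalkLength (G.dist s v) s v).card := by
        apply Finset.sum_congr rfl
        intro v hv
        rw [Finset.mem_filter] at hv
        rw [show G.dist s v = n by omega]

/-- Equal-cost multi-path routing conserves flow: if a unit of traffic at the
destination `t` is split backward along the shortest-path DAG from the source
`s`, with the flow at each vertex `v` split among its shortest-path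
predecessors `u` in proportion `σ u / σ v`, then the total flow arriving at
the source equals the injected unit. -/
theorem ecmp_flow_conservation {V : Type*} [Fintype V] [DecidableEq V]
    (G : SimpleGraph V) [DecidableRel G.Adj]
    (s t : V) (hst : s ≠ t) (hreach : G.Reachable s t)
    (σ : V → ℕ) (hσ : ∀ v, σ v = (G.finsetWalkLength (G.dist s v) s v).card)
    (f : V → ℝ) (hft : f t = 1)
    (hrec : ∀ u : V, u ≠ t →
      f u = ∑ v ∈ Finset.univ.filter
        (fun v => G.Adj u v ∧ G.dist s u + 1 = G.dist s v),
        f v * (σ u : ℝ) / (σ v : ℝ)) :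
    f s = 1 := by
  have hσpos : ∀ v, G.Reachable s v → 0 < σ v := fun v hr => by
    rw [hσ v]; exact wl_card_pos G hr
  -- Flow is zero strictly above the level of t.
  have hzero : ∀ (m : ℕ) (v : V), G.dist s t < G.dist s v →
      Fintype.card V ≤ G.dist s v + m → f v = 0 := by
    intro m
    induction m with
    | zero =>
      intro v h1 h2
      exfalso
      have hrv : G.Reachable s v :=
        SimpleGraph.Reachable.of_dist_ne_zero (by omega)
      obtain ⟨p, hp, hpl⟩ := hrv.exists_path_of_dist
      have := hp.length_lt
      omega
    | succ m ih =>
      intro v h1 h2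
      have hvt : v ≠ t := by rintro rfl; omega
      rw [hrec v hvt]
      apply Finset.sum_eq_zero
      intro w hw
      rw [Finset.mem_filter] at hw
      rw [ih w (by omega) (by omega)]
      simp
  have hzero' : ∀ v, G.dist s t < G.dist s v → f v = 0 := fun v h =>
    hzero (Fintype.card V) v h (Nat.le_add_left _ _)
  -- Level sums equal 1 down from the level of t.
  have hT : ∀ j, j ≤ G.dist s t →
      ∑ v ∈ Finset.univ.filter
        (fun v => G.dist s v = G.dist s t - j ∧ G.Reachable s v), f v = 1 := by
    intro j
    induction j with
    | zero =>
      intro _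
      rw [Finset.sum_eq_single_of_mem t
        (Finset.mem_filter.mpr ⟨Finset.mem_univ t, by omega, hreach⟩)]
      · exact hft
      · intro v hv hvt
        rw [Finset.mem_filter] at hv
        rw [hrec v hvt]
        apply Finset.sum_eq_zero
        intro w hw
        rw [Finset.mem_filter] at hw
        rw [hzero' w (by omega)]
        simp
    | succ j ih =>
      intro hj
      have hprev := ih (by omega)
      set k := G.dist s t - (j + 1) with hk
      have hk1 : k + 1 = G.dist s t - j := by omega
      have hklt : k < G.dist s t := by omega
      -- rewrite each flow via the recursion
      have step1 : ∑ v ∈ Finset.univ.filter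
            (fun v => G.dist s v = k ∧ G.Reachable s v), f v
          = ∑ v ∈ Finset.univ, ∑ w ∈ Finset.univ,
              (if G.dist s v = k ∧ G.Reachable s v then
                (if G.Adj v w ∧ G.dist s v + 1 = G.dist s w then
                  f w * (σ v : ℝ) / (σ w : ℝ) else 0) else 0) := by
        rw [Finset.sum_filter]
        apply Finset.sum_congr rfl
        intro v _
        by_cases h1 : G.dist s v = k ∧ G.Reachable s v
        · rw [if_pos h1]
          have hvt : v ≠ t := by rintro rfl; omega
          rw [hrec v hvt, Finset.sum_filter]
          exact Finset.sum_congr rfl fun w _ => (if_pos h1).symm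
        · rw [if_neg h1, Finset.sum_eq_zero]
          intro w _
          rw [if_neg h1]
      have inner : ∀ w, (∑ v ∈ Finset.univ,
            (if G.dist s v = k ∧ G.Reachable s v then
              (if G.Adj v w ∧ G.dist s v + 1 = G.dist s w then
                f w * (σ v : ℝ) / (σ w : ℝ) else 0) else 0))
          = if G.dist s w = k + 1 ∧ G.Reachable s w then f w else 0 := by
        intro w
        by_cases hw : G.dist s w = k + 1 ∧ G.Reachable s w
        · rw [if_pos hw]
          have hsimp : ∀ v, (if G.dist s v = k ∧ G.Reachable s v then
                (if G.Adj v w ∧ G.dist s v + 1 = G.dist s w then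
                  f w * (σ v : ℝ) / (σ w : ℝ) else 0) else 0)
              = if G.Adj v w ∧ G.dist s v + 1 = G.dist s w then
                  f w * (σ v : ℝ) / (σ w : ℝ) else 0 := by
            intro v
            by_cases h2 : G.Adj v w ∧ G.dist s v + 1 = G.dist s w
            · obtain ⟨hw1, hw2⟩ := hw
              obtain ⟨h21, h22⟩ := h2
              rw [if_pos ⟨by omega, hw2.trans h21.symm.reachable⟩]
            · rw [if_neg h2]
              split_ifs with h1
              · rfl
              · rfl
          rw [Finset.sum_congr rfl fun v _ => hsimp v, ← Finset.sum_filter]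
          have hσw : (σ w : ℝ) = ∑ v ∈ Finset.univ.filter
              (fun v => G.Adj v w ∧ G.dist s v + 1 = G.dist s w), (σ v : ℝ) := by
            rw [← Nat.cast_sum]
            congr 1
            rw [hσ w, sigma_rec G s hw.2 hw.1]
            exact Finset.sum_congr rfl fun v _ => (hσ v).symm
          have hσwne : (σ w : ℝ) ≠ 0 := by
            exact_mod_cast (hσpos w hw.2).ne'
          calc ∑ v ∈ Finset.univ.filter
                (fun v => G.Adj v w ∧ G.dist s v + 1 = G.dist s w),
                f w * (σ v : ℝ) / (σ w : ℝ)
              = (∑ v ∈ Finset.univ.filter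
                (fun v => G.Adj v w ∧ G.dist s v + 1 = G.dist s w),
                (σ v : ℝ)) * f w / (σ w : ℝ) := by
                rw [Finset.sum_mul, Finset.sum_div]
                exact Finset.sum_congr rfl fun v _ => by ring
            _ = (σ w : ℝ) * f w / (σ w : ℝ) := by rw [← hσw]
            _ = f w := by field_simp
        · rw [if_neg hw]
          apply Finset.sum_eq_zero
          intro v _
          split_ifs with h1 h2
          · exact absurd ⟨by omega, h1.2.trans h2.1.reachable⟩ hw
          · rfl
          · rfl
      rw [step1, Finset.sum_comm]
      rw [Finset.sum_congr rfl fun w _ => inner w, ← Finset.sum_filter, hk1]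
      exact hprev
  -- conclude at level 0
  have h0 := hT (G.dist s t) le_rfl
  have hfilter : Finset.univ.filter
      (fun v => G.dist s v = G.dist s t - G.dist s t ∧ G.Reachable s v) = {s} := by
    ext v
    simp only [Finset.mem_filter, Finset.mem_univ, true_and, Finset.mem_singleton,
      Nat.sub_self]
    constructor
    · rintro ⟨hd, hr⟩
      exact (hr.dist_eq_zero_iff.mp hd).symm
    · rintro rfl
      exact ⟨SimpleGraph.dist_self, SimpleGraph.Reachable.refl _⟩
  rw [hfilter, Finset.sum_singleton] at h0
  exact h0
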